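/- Layer-wise upper bound for the reconstruction error of symmetric orthogonal autoencoders: in the same SOAE setting, for every v ∈ ℝ^{n₀}: ‖v − ℛ(v)‖² ≤ Σ_{k=0}^{l−1} Lip(ρ⁻¹)^{2k} ‖E_k(v) − [V_{k+1}V_{k+1}ᵀ(E_k(v) − b_{k+1}) + b_{k+1}]‖². -/
import Mathlib


open Matrix

/-- Partial encoder of a symmetric orthogonal autoencoder:
`e_j(h) = ρ(V_jᵀ(h - b_j))` (componentwise `ρ`). -/
def encO (ρ : ℝ → ℝ) (n : ℕ → ℕ)
    (V : (j : ℕ) → Matrix (Fin (n j)) (Fin (n (j + 1))) ℝ)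
    (b : (j : ℕ) → Fin (n j) → ℝ) :
    (l : ℕ) → (Fin (n 0) → ℝ) → Fin (n l) → ℝ
  | 0, v => v
  | l + 1, v => fun i => ρ (((V l)ᵀ *ᵥ (encO ρ n V b l v - b l)) i)

/-- Partial decoder: `d_j(c) = V_j ρ⁻¹(c) + b_j` (componentwise `ρ⁻¹`). -/
def decO (ρinv : ℝ → ℝ) (n : ℕ → ℕ)
    (V : (j : ℕ) → Matrix (Fin (n j)) (Fin (n (j + 1))) ℝ)
    (b : (j : ℕ) → Fin (n j) → ℝ) :
    (l : ℕ) → (Fin (n l) → ℝ) → Fin (n 0) → ℝ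
  | 0, c => c
  | l + 1, c => decO ρinv n V b l (V l *ᵥ (fun i => ρinv (c i)) + b l)

lemma encO_shift (ρ : ℝ → ℝ) (n : ℕ → ℕ)
    (V : (j : ℕ) → Matrix (Fin (n j)) (Fin (n (j + 1))) ℝ)
    (b : (j : ℕ) → Fin (n j) → ℝ) (v : Fin (n 0) → ℝ) :
    ∀ k, encO ρ n V b (k + 1) v
      = encO ρ (fun j => n (j + 1)) (fun j => V (j + 1)) (fun j => b (j + 1)) k
          (encO ρ n V b 1 v)
  | 0 => rfl
  | k + 1 => by
      show (fun i => ρ (((V (k + 1))ᵀ *ᵥ (encO ρ n V b (k + 1) v - b (k + 1))) i)) = _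
      rw [encO_shift ρ n V b v k]
      rfl

lemma decO_shift (ρinv : ℝ → ℝ) (n : ℕ → ℕ)
    (V : (j : ℕ) → Matrix (Fin (n j)) (Fin (n (j + 1))) ℝ)
    (b : (j : ℕ) → Fin (n j) → ℝ) :
    ∀ k (c : Fin (n (k + 1)) → ℝ),
      decO ρinv n V b (k + 1) c
        = V 0 *ᵥ (fun i =>
            ρinv (decO ρinv (fun j => n (j + 1)) (fun j => V (j + 1)) (fun j => b (j + 1)) k c i))
          + b 0
  | 0, c => rfl
  | k + 1, c => by
      show decO ρinv n V b (k + 1) (V (k + 1) *ᵥ (fun i => ρinv (c i)) + b (k + 1)) = _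
      rw [decO_shift ρinv n V b k]
      rfl

lemma soae_orth {m p : ℕ} (A : Matrix (Fin m) (Fin p) ℝ) (hA : Aᵀ * A = 1)
    (u : Fin m → ℝ) (w : Fin p → ℝ) :
    ∑ i, ((u - A *ᵥ (Aᵀ *ᵥ u)) i) * ((A *ᵥ w) i) = 0 := by
  have h0 : Aᵀ *ᵥ (u - A *ᵥ (Aᵀ *ᵥ u)) = 0 := by
    rw [Matrix.mulVec_sub, Matrix.mulVec_mulVec, hA, Matrix.one_mulVec, sub_self]
  calc ∑ i, ((u - A *ᵥ (Aᵀ *ᵥ u)) i) * ((A *ᵥ w) i)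
      = (u - A *ᵥ (Aᵀ *ᵥ u)) ⬝ᵥ (A *ᵥ w) := rfl
    _ = ((u - A *ᵥ (Aᵀ *ᵥ u)) ᵥ* A) ⬝ᵥ w := by
        rw [Matrix.dotProduct_mulVec]
    _ = 0 := by rw [← Matrix.mulVec_transpose, h0]; simp [dotProduct]

lemma soae_normpres {m p : ℕ} (A : Matrix (Fin m) (Fin p) ℝ) (hA : Aᵀ * A = 1)
    (w : Fin p → ℝ) :
    ∑ i, ((A *ᵥ w) i) ^ 2 = ∑ i, (w i) ^ 2 := by
  have : (A *ᵥ w) ⬝ᵥ (A *ᵥ w) = w ⬝ᵥ w := by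
    rw [Matrix.dotProduct_mulVec, ← Matrix.mulVec_transpose, Matrix.mulVec_mulVec, hA,
      Matrix.one_mulVec]
  simpa [dotProduct, sq] using this

lemma soae_pyth {m : ℕ} (x y : Fin m → ℝ) (h : ∑ i, x i * y i = 0) :
    ∑ i, (x i + y i) ^ 2 = ∑ i, x i ^ 2 + ∑ i, y i ^ 2 := by
  have he : ∀ i ∈ Finset.univ, (x i + y i) ^ 2 = (x i ^ 2 + y i ^ 2) + 2 * (x i * y i) := by
    intro i _; ring
  rw [Finset.sum_congr rfl he, Finset.sum_add_distrib, Finset.sum_add_distrib,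
    ← Finset.mul_sum, h]
  ring

lemma soae_aux (ρ ρinv : ℝ → ℝ)
    (hli : Function.LeftInverse ρinv ρ)
    (Kinv : ℝ) (hKinv0 : 0 ≤ Kinv)
    (hKinv : ∀ x y : ℝ, |ρinv x - ρinv y| ≤ Kinv * |x - y|) :
    ∀ (l : ℕ) (n : ℕ → ℕ)
      (V : (j : ℕ) → Matrix (Fin (n j)) (Fin (n (j + 1))) ℝ)
      (hV : ∀ j, (V j)ᵀ * V j = 1)
      (b : (j : ℕ) → Fin (n j) → ℝ) (v : Fin (n 0) → ℝ),
      (∑ i, ((v - decO ρinv n V b l (encO ρ n V b l v)) i) ^ 2) ≤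
        ∑ k ∈ Finset.range l, Kinv ^ (2 * k) *
          (∑ i, ((encO ρ n V b k v -
            (V k *ᵥ ((V k)ᵀ *ᵥ (encO ρ n V b k v - b k)) + b k)) i) ^ 2) := by
  intro l
  induction l with
  | zero => intro n V hV b v; simp [encO, decO]
  | succ l IH =>
    intro n V hV b v
    set n' : ℕ → ℕ := fun j => n (j + 1) with hn'
    set V' : (j : ℕ) → Matrix (Fin (n' j)) (Fin (n' (j + 1))) ℝ := fun j => V (j + 1) with hV'
    set b' : (j : ℕ) → Fin (n' j) → ℝ := fun j => b (j + 1) with hb'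
    set h : Fin (n 1) → ℝ := encO ρ n V b 1 v with hh
    set R : Fin (n 1) → ℝ := decO ρinv n' V' b' l (encO ρ n' V' b' l h) with hR
    set x : Fin (n 0) → ℝ := v - (V 0 *ᵥ ((V 0)ᵀ *ᵥ (v - b 0)) + b 0) with hx
    set w : Fin (n 1) → ℝ := fun i => ρinv (h i) - ρinv (R i) with hw
    have hinvh : (fun i => ρinv (h i)) = (V 0)ᵀ *ᵥ (v - b 0) := by
      funext j
      show ρinv (ρ _) = _
      rw [hli]
      simp [encO]
    have hsub : V 0 *ᵥ w = V 0 *ᵥ ((V 0)ᵀ *ᵥ (v - b 0)) - V 0 *ᵥ (fun i => ρinv (R i)) := by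
      rw [← hinvh, ← Matrix.mulVec_sub]; rfl
    have hdec : v - decO ρinv n V b (l + 1) (encO ρ n V b (l + 1) v)
        = fun i => x i + (V 0 *ᵥ w) i := by
      rw [encO_shift, decO_shift]
      show v - ((V 0 *ᵥ fun i => ρinv (R i)) + b 0) = fun i => x i + (V 0 *ᵥ w) i
      funext i
      simp only [Pi.sub_apply, Pi.add_apply, hx, hsub]
      ring
    rw [hdec]
    have horth := soae_orth (V 0) (hV 0) (v - b 0) w
    have hxo : ∑ i, x i * (V 0 *ᵥ w) i = 0 := by
      have : x = (v - b 0) - V 0 *ᵥ ((V 0)ᵀ *ᵥ (v - b 0)) := by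
        funext i; simp [hx]; ring
      rw [this]; exact horth
    rw [soae_pyth x (V 0 *ᵥ w) hxo, soae_normpres (V 0) (hV 0) w]
    have hw2 : ∑ i, (w i) ^ 2 ≤ Kinv ^ 2 * ∑ i, ((h - R) i) ^ 2 := by
      rw [Finset.mul_sum]
      apply Finset.sum_le_sum
      intro i _
      have := hKinv (h i) (R i)
      have h1 : (w i) ^ 2 ≤ (Kinv * |h i - R i|) ^ 2 := by
        have := abs_nonneg (ρinv (h i) - ρinv (R i))
        nlinarith [sq_abs (w i), abs_nonneg (w i), hKinv (h i) (R i),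
          sq_abs (ρinv (h i) - ρinv (R i))]
      calc (w i) ^ 2 ≤ (Kinv * |h i - R i|) ^ 2 := h1
        _ = Kinv ^ 2 * ((h - R) i) ^ 2 := by rw [mul_pow, sq_abs]; rfl
    have hIH := IH n' V' (fun j => hV (j + 1)) b' h
    rw [Finset.sum_range_succ']
    have hshift : ∀ k, encO ρ n V b (k + 1) v = encO ρ n' V' b' k h := by
      intro k; exact encO_shift ρ n V b v k
    have hRHS : ∑ k ∈ Finset.range l, Kinv ^ (2 * (k + 1)) *
          (∑ i, ((encO ρ n V b (k + 1) v -
            (V (k + 1) *ᵥ ((V (k + 1))ᵀ *ᵥ (encO ρ n V b (k + 1) v - b (k + 1))) + b (k + 1))) i) ^ 2)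
        = Kinv ^ 2 * ∑ k ∈ Finset.range l, Kinv ^ (2 * k) *
          (∑ i, ((encO ρ n' V' b' k h -
            (V' k *ᵥ ((V' k)ᵀ *ᵥ (encO ρ n' V' b' k h - b' k)) + b' k)) i) ^ 2) := by
      rw [Finset.mul_sum]
      apply Finset.sum_congr rfl
      intro k _
      rw [hshift k]
      have : Kinv ^ (2 * (k + 1)) = Kinv ^ 2 * Kinv ^ (2 * k) := by
        rw [← pow_add]; ring_nf
      rw [this, mul_assoc]
    rw [hRHS]
    have hR2 : ∑ i, ((h - R) i) ^ 2 ≤ ∑ k ∈ Finset.range l, Kinv ^ (2 * k) *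
          (∑ i, ((encO ρ n' V' b' k h -
            (V' k *ᵥ ((V' k)ᵀ *ᵥ (encO ρ n' V' b' k h - b' k)) + b' k)) i) ^ 2) := hIH
    have hK2 : (0:ℝ) ≤ Kinv ^ 2 := sq_nonneg _
    have hbase : ∑ i, x i ^ 2 = Kinv ^ (2 * 0) *
        ∑ i, ((encO ρ n V b 0 v - (V 0 *ᵥ ((V 0)ᵀ *ᵥ (encO ρ n V b 0 v - b 0)) + b 0)) i) ^ 2 := by
      simp [encO, hx]
    rw [← hbase] at *
    calc ∑ i, x i ^ 2 + ∑ i, (w i) ^ 2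
        ≤ ∑ i, x i ^ 2 + Kinv ^ 2 * ∑ i, ((h - R) i) ^ 2 := by linarith
      _ ≤ _ := by
          have := mul_le_mul_of_nonneg_left hR2 hK2
          linarith

theorem soae_layerwise_upper_bound
    (ρ ρinv : ℝ → ℝ) (η L : ℝ) (hη : 0 < η) (hL : 0 < L)
    (hbl : ∀ x y : ℝ, η * |x - y| ≤ |ρ x - ρ y| ∧ |ρ x - ρ y| ≤ L * |x - y|)
    (hli : Function.LeftInverse ρinv ρ) (hri : Function.RightInverse ρinv ρ)
    (l : ℕ) (hl : 2 ≤ l) (n : ℕ → ℕ) (hpos : ∀ j, 0 < n j) (hmono : ∀ j, n (j + 1) ≤ n j)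
    (V : (j : ℕ) → Matrix (Fin (n j)) (Fin (n (j + 1))) ℝ)
    (hV : ∀ j, (V j)ᵀ * V j = 1)
    (b : (j : ℕ) → Fin (n j) → ℝ)
    (Kinv : ℝ) (hKinv0 : 0 ≤ Kinv)
    (hKinv : ∀ x y : ℝ, |ρinv x - ρinv y| ≤ Kinv * |x - y|) :
    ∀ v : Fin (n 0) → ℝ,
      (∑ i, ((v - decO ρinv n V b l (encO ρ n V b l v)) i) ^ 2) ≤
        ∑ k ∈ Finset.range l, Kinv ^ (2 * k) *
          (∑ i, ((encO ρ n V b k v -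
            (V k *ᵥ ((V k)ᵀ *ᵥ (encO ρ n V b k v - b k)) + b k)) i) ^ 2) := by
  intro v
  exact soae_aux ρ ρinv hli Kinv hKinv0 hKinv l n V hV b v
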